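/- arXiv:2207.10037 — 2 statements merged into one kernel-verified Lean document; each statement's English description precedes it below -/
import Mathlib

section
/- For any differential k-form η on the standard n-simplex with affine coefficients whose pullback to each k-face is a constant form, if the integral of η over every k-face is zero, then η is identically zero. -/
/-!
A constant pullback with vanishing integral over a face of positive volume is zero, so the form
vanishes on every `k`-face. On the face spanned by `0` and the `eⱼ`, `j ∈ J`, the edges `eⱼ`
isolate the coefficient `f_J`, so `f_J` vanishes at `0` and at each `eⱼ`. For `m ∉ J`, on the face
spanned by `eₘ` and the `eⱼ` the edges `eⱼ - eₘ` isolate `f_J` at `eₘ` up to coefficients `f_I`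
with `m ∈ I`, which vanish at `eₘ` by the first case. An affine function vanishing at all vertices
of the simplex is zero.
-/

open MeasureTheory Finset

/-- A real-valued function on `ℝⁿ` is affine if it has the form `x ↦ ∑ aᵢ xⁱ + b`. -/
def IsAffineFn {n : ℕ} (f : (Fin n → ℝ) → ℝ) : Prop :=
  ∃ (a : Fin n → ℝ) (b : ℝ), ∀ x, f x = (∑ i, a i * x i) + b

/-- The standard `n`-simplex `{x : xⁱ ≥ 0, ∑ xⁱ ≤ 1}` in `ℝⁿ`. -/
def stdSimp (n : ℕ) : Set (Fin n → ℝ) :=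
  {x | (∀ i, 0 ≤ x i) ∧ (∑ i, x i) ≤ 1}

/-- The basic alternating `k`-form `dx^I` (for a strictly increasing multi-index given by a
`k`-element subset `I` of `{1,…,n}`) evaluated on `k` vectors. -/
def dxI {n k : ℕ} (I : {s : Finset (Fin n) // s.card = k}) (v : Fin k → Fin n → ℝ) : ℝ :=
  Matrix.det (Matrix.of fun i j => v j ((I.1.orderIsoOfFin I.2 i : Fin n)))

/-- The `k`-form `∑_I f_I dx^I` with coefficient functions `f_I`, evaluated at the point `x`
on the `k` vectors `v`. -/
def formEval {n k : ℕ} (f : {s : Finset (Fin n) // s.card = k} → (Fin n → ℝ) → ℝ)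
    (x : Fin n → ℝ) (v : Fin k → Fin n → ℝ) : ℝ :=
  ∑ I : {s : Finset (Fin n) // s.card = k}, f I x * dxI I v

/-- The vertices of the standard `n`-simplex: `p₀ = 0`, `pᵢ = eᵢ`. -/
def vert (n : ℕ) : Fin (n+1) → Fin n → ℝ :=
  Fin.cases 0 (fun j => Pi.single j 1)

/-- Affine parametrization of the `k`-face of the standard `n`-simplex with vertex set `S`
(vertices taken in increasing order), defined on the standard `k`-simplex. -/
def facePt {n k : ℕ} (S : {s : Finset (Fin (n+1)) // s.card = k+1}) (y : Fin k → ℝ) :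
    Fin n → ℝ :=
  vert n ((S.1.orderIsoOfFin S.2 0 : Fin (n+1))) +
    ∑ s : Fin k, y s • (vert n ((S.1.orderIsoOfFin S.2 s.succ : Fin (n+1))) -
      vert n ((S.1.orderIsoOfFin S.2 0 : Fin (n+1))))

/-- The differential of the face parametrization `facePt S`. -/
def faceDir {n k : ℕ} (S : {s : Finset (Fin (n+1)) // s.card = k+1}) (w : Fin k → ℝ) :
    Fin n → ℝ :=
  ∑ s : Fin k, w s • (vert n ((S.1.orderIsoOfFin S.2 s.succ : Fin (n+1))) -
    vert n ((S.1.orderIsoOfFin S.2 0 : Fin (n+1))))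

/-- Barycentric coordinates of the standard `n`-simplex: `ν₀ = 1 - ∑ xⁱ`, `νᵢ = xⁱ`. -/
def nu (n : ℕ) (j : Fin (n+1)) (x : Fin n → ℝ) : ℝ :=
  Fin.cases (1 - ∑ i, x i) (fun i => x i) j

/-- The differentials `dνⱼ` of the barycentric coordinates, as linear functionals. -/
def dnu (n : ℕ) (j : Fin (n+1)) (v : Fin n → ℝ) : ℝ :=
  Fin.cases (-(∑ i, v i)) (fun i => v i) j

/-- The Whitney form `W τ* = k! ∑ⱼ (-1)ʲ ν_{iⱼ} dν_{i₀} ∧ ⋯ ∧ (omit dν_{iⱼ}) ∧ ⋯ ∧ dν_{i_k}`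
of the dual cochain of the face with vertex set `S`, evaluated at `x` on the vectors `v`. -/
def whitneyFace {n k : ℕ} (S : {s : Finset (Fin (n+1)) // s.card = k+1})
    (x : Fin n → ℝ) (v : Fin k → Fin n → ℝ) : ℝ :=
  (Nat.factorial k : ℝ) * ∑ j : Fin (k+1), (-1 : ℝ) ^ (j : ℕ) *
    nu n ((S.1.orderIsoOfFin S.2 j : Fin (n+1))) x *
    Matrix.det (Matrix.of fun (t : Fin k) (m2 : Fin k) =>
      dnu n ((S.1.orderIsoOfFin S.2 (j.succAbove t) : Fin (n+1))) (v m2))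

/-- The Whitney map `W`, extended linearly to all real `k`-cochains. -/
def whitney {n k : ℕ} (c : {s : Finset (Fin (n+1)) // s.card = k+1} → ℝ)
    (x : Fin n → ℝ) (v : Fin k → Fin n → ℝ) : ℝ :=
  ∑ S, c S * whitneyFace S x v

/-- The integral of a `k`-form (given by its evaluation function `F`) over the `k`-face with
vertex set `S`, computed via the parametrization `facePt S`. -/
noncomputable def faceIntegral {n k : ℕ} (S : {s : Finset (Fin (n+1)) // s.card = k+1})
    (F : (Fin n → ℝ) → (Fin k → Fin n → ℝ) → ℝ) : ℝ :=
  ∫ y in stdSimp k, F (facePt S y) (fun s => faceDir S (Pi.single s 1))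

/-- A `k`-form (given by its evaluation function) pulls back to a constant form on every
`k`-face of the standard `n`-simplex. -/
def ConstOnFaces {n k : ℕ} (F : (Fin n → ℝ) → (Fin k → Fin n → ℝ) → ℝ) : Prop :=
  ∀ S : {s : Finset (Fin (n+1)) // s.card = k+1}, ∃ cst : ℝ,
    ∀ y ∈ stdSimp k, ∀ w : Fin k → Fin k → ℝ,
      F (facePt S y) (fun i => faceDir S (w i)) = cst * Matrix.det (Matrix.of fun i j => w j i)

section Simplex

variable {k : ℕ}

lemma isClosed_stdSimp : IsClosed (stdSimp k) := by
  simp only [stdSimp, Set.ofPred_and, Set.ofPred_forall]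
  exact (isClosed_iInter fun i => isClosed_le continuous_const (continuous_apply i)).inter
    (isClosed_le (continuous_finsetSum _ fun i _ => continuous_apply i) continuous_const)

lemma volume_stdSimp_pos : 0 < volume (stdSimp k) := by
  let U : Set (Fin k → ℝ) := Set.univ.pi (fun _ => Set.Ioi 0) ∩ {x | ∑ i, x i < 1}
  have hU : IsOpen U :=
    (isOpen_set_pi Set.finite_univ fun _ _ => isOpen_Ioi).inter
      (isOpen_lt (by fun_prop) continuous_const)
  have hcenter : (fun _ => 1 / (k + 2 : ℝ)) ∈ U := by
    refine ⟨fun _ _ => show (0:ℝ) < 1 / (k + 2) by positivity, ?_⟩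
    change ∑ _i : Fin k, 1 / (k + 2 : ℝ) < 1
    rw [sum_const, card_univ, Fintype.card_fin, nsmul_eq_mul, mul_one_div,
      div_lt_one (by positivity)]
    linarith
  refine (hU.measure_pos volume ⟨_, hcenter⟩).trans_le (measure_mono ?_)
  exact fun x hx => ⟨fun i => le_of_lt (hx.1 i (Set.mem_univ i)), hx.2.le⟩

lemma volume_stdSimp_lt_top : volume (stdSimp k) < ⊤ := by
  refine ((Metric.isBounded_Icc (0 : Fin k → ℝ) 1).subset
    fun x hx => ⟨hx.1, fun i => ?_⟩).measure_lt_top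
  exact (single_le_sum (fun j _ => hx.1 j) (mem_univ i)).trans hx.2

lemma measureReal_stdSimp_pos : 0 < volume.real (stdSimp k) :=
  ENNReal.toReal_pos volume_stdSimp_pos.ne' volume_stdSimp_lt_top.ne

lemma zero_mem_stdSimp : (0 : Fin k → ℝ) ∈ stdSimp k :=
  ⟨fun _ => le_rfl, by simp⟩

lemma single_mem_stdSimp (s : Fin k) : (Pi.single s 1 : Fin k → ℝ) ∈ stdSimp k :=
  ⟨fun i => by by_cases h : i = s <;> simp [h], by simp⟩

end Simplex

section Faces

variable {n k : ℕ}

def VanishesOnFace (F : (Fin n → ℝ) → (Fin k → Fin n → ℝ) → ℝ)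
    (S : {s : Finset (Fin (n+1)) // s.card = k+1}) : Prop :=
  ∀ y ∈ stdSimp k, ∀ w : Fin k → Fin k → ℝ, F (facePt S y) (fun i => faceDir S (w i)) = 0

lemma ConstOnFaces.vanishesOnFace {F : (Fin n → ℝ) → (Fin k → Fin n → ℝ) → ℝ}
    (hF : ConstOnFaces F) {S : {s : Finset (Fin (n+1)) // s.card = k+1}}
    (hS : faceIntegral S F = 0) : VanishesOnFace F S := by
  obtain ⟨c, hc⟩ := hF S
  have hbasis : ∀ y ∈ stdSimp k, F (facePt S y) (fun s => faceDir S (Pi.single s 1)) = c := by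
    intro y hy
    have hone : (Matrix.of fun i j : Fin k => (Pi.single j 1 : Fin k → ℝ) i) = 1 := by
      ext i j
      simp [Matrix.one_apply, Pi.single_apply]
    simpa [hone] using hc y hy (fun i => Pi.single i 1)
  rw [faceIntegral, setIntegral_congr_fun isClosed_stdSimp.measurableSet hbasis,
    setIntegral_const, smul_eq_mul] at hS
  have hc0 : c = 0 := (mul_eq_zero.1 hS).resolve_left measureReal_stdSimp_pos.ne'
  intro y hy w
  rw [hc y hy w, hc0, zero_mul]

lemma facePt_zero (S : {s : Finset (Fin (n+1)) // s.card = k+1}) :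
    facePt S 0 = vert n (S.1.orderIsoOfFin S.2 0) := by
  simp [facePt]

lemma facePt_single (S : {s : Finset (Fin (n+1)) // s.card = k+1}) (s : Fin k) :
    facePt S (Pi.single s 1) = vert n (S.1.orderIsoOfFin S.2 s.succ) := by
  simp [facePt, Pi.single_apply]

lemma faceDir_sub (S : {s : Finset (Fin (n+1)) // s.card = k+1}) (w w' : Fin k → ℝ) :
    faceDir S (w - w') = faceDir S w - faceDir S w' := by
  simp only [faceDir, Pi.sub_apply, sub_smul, sum_sub_distrib]

lemma exists_facePt_eq_vert (S : {s : Finset (Fin (n+1)) // s.card = k+1}) {a : Fin (n+1)}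
    (ha : a ∈ S.1) : ∃ y ∈ stdSimp k, facePt S y = vert n a := by
  obtain ⟨i, hi⟩ := (S.1.orderIsoOfFin S.2).surjective ⟨a, ha⟩
  obtain rfl : (S.1.orderIsoOfFin S.2 i : Fin (n+1)) = a := congrArg Subtype.val hi
  cases i using Fin.cases with
  | zero => exact ⟨0, zero_mem_stdSimp, facePt_zero S⟩
  | succ s => exact ⟨Pi.single s 1, single_mem_stdSimp s, facePt_single S s⟩

lemma exists_faceDir_eq_vert_sub_vert_zero (S : {s : Finset (Fin (n+1)) // s.card = k+1})
    {a : Fin (n+1)} (ha : a ∈ S.1) :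
    ∃ w, faceDir S w = vert n a - vert n (S.1.orderIsoOfFin S.2 0) := by
  obtain ⟨i, hi⟩ := (S.1.orderIsoOfFin S.2).surjective ⟨a, ha⟩
  obtain rfl : (S.1.orderIsoOfFin S.2 i : Fin (n+1)) = a := congrArg Subtype.val hi
  cases i using Fin.cases with
  | zero => exact ⟨0, by simp [faceDir]⟩
  | succ s => exact ⟨Pi.single s 1, by simp [faceDir, Pi.single_apply]⟩

lemma exists_faceDir_eq_vert_sub_vert (S : {s : Finset (Fin (n+1)) // s.card = k+1})
    {a b : Fin (n+1)} (ha : a ∈ S.1) (hb : b ∈ S.1) :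
    ∃ w, faceDir S w = vert n a - vert n b := by
  obtain ⟨wa, hwa⟩ := exists_faceDir_eq_vert_sub_vert_zero S ha
  obtain ⟨wb, hwb⟩ := exists_faceDir_eq_vert_sub_vert_zero S hb
  exact ⟨wa - wb, by rw [faceDir_sub, hwa, hwb, sub_sub_sub_cancel_right]⟩

lemma VanishesOnFace.apply_vert_sub_vert {F : (Fin n → ℝ) → (Fin k → Fin n → ℝ) → ℝ}
    {S : {s : Finset (Fin (n+1)) // s.card = k+1}} (hF : VanishesOnFace F S)
    {p : Fin (n+1)} (hp : p ∈ S.1) (a b : Fin k → Fin (n+1)) (ha : ∀ s, a s ∈ S.1)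
    (hb : ∀ s, b s ∈ S.1) :
    F (vert n p) (fun s => vert n (a s) - vert n (b s)) = 0 := by
  obtain ⟨y, hy, hyp⟩ := exists_facePt_eq_vert S hp
  choose w hw using fun s => exists_faceDir_eq_vert_sub_vert S (ha s) (hb s)
  simpa only [hyp, hw] using hF y hy w

end Faces

section Coefficients

variable {n k : ℕ}

lemma vert_zero : vert n 0 = 0 := rfl

lemma vert_succ (i : Fin n) : vert n i.succ = Pi.single i 1 := rfl

lemma dxI_congr {I : {s : Finset (Fin n) // s.card = k}} {v w : Fin k → Fin n → ℝ}
    (h : ∀ s, ∀ i ∈ I.1, v s i = w s i) : dxI I v = dxI I w := by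
  unfold dxI
  congr 1
  ext i j
  exact h j _ (I.1.orderIsoOfFin I.2 i).2

lemma dxI_single_orderEmbOfFin (I J : {s : Finset (Fin n) // s.card = k}) :
    dxI I (fun s => Pi.single (J.1.orderEmbOfFin J.2 s) 1) = if I = J then 1 else 0 := by
  split_ifs with hIJ
  · subst hIJ
    have hone : (Matrix.of fun i j => (Pi.single (I.1.orderEmbOfFin I.2 j) 1 : Fin n → ℝ)
        (I.1.orderIsoOfFin I.2 i)) = 1 := by
      ext i j
      simp [Matrix.one_apply, Pi.single_apply]
    rw [dxI, hone, Matrix.det_one]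
  · obtain ⟨x, hxI, hxJ⟩ : ∃ x ∈ I.1, x ∉ J.1 := not_subset.1 fun hsub =>
      hIJ (Subtype.ext (eq_of_subset_of_card_le hsub (by rw [I.2, J.2])))
    obtain ⟨i, hi⟩ := (I.1.orderIsoOfFin I.2).surjective ⟨x, hxI⟩
    refine Matrix.det_eq_zero_of_row_eq_zero i fun j => ?_
    rw [Matrix.of_apply, hi]
    exact Pi.single_eq_of_ne (fun hx : x = _ => hxJ (hx ▸ orderEmbOfFin_mem J.1 J.2 j)) 1

lemma dxI_single_sub_single (I J : {s : Finset (Fin n) // s.card = k}) {m : Fin n}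
    (hm : m ∉ I.1) :
    dxI I (fun s => Pi.single (J.1.orderEmbOfFin J.2 s) 1 - Pi.single m 1) =
      if I = J then 1 else 0 := by
  rw [← dxI_single_orderEmbOfFin]
  exact dxI_congr fun s i hi => by simp [ne_of_mem_of_not_mem hi hm]

lemma formEval_single_orderEmbOfFin (f : {s : Finset (Fin n) // s.card = k} → (Fin n → ℝ) → ℝ)
    (J : {s : Finset (Fin n) // s.card = k}) (x : Fin n → ℝ) :
    formEval f x (fun s => Pi.single (J.1.orderEmbOfFin J.2 s) 1) = f J x := by
  simp [formEval, dxI_single_orderEmbOfFin]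

def coneFace (J : {s : Finset (Fin n) // s.card = k}) (p : Fin (n+1))
    (hp : p ∉ J.1.map (Fin.succEmb n)) : {s : Finset (Fin (n+1)) // s.card = k+1} :=
  ⟨insert p (J.1.map (Fin.succEmb n)), by rw [card_insert_of_notMem hp, card_map, J.2]⟩

lemma succ_orderEmbOfFin_mem_coneFace (J : {s : Finset (Fin n) // s.card = k})
    (p : Fin (n+1)) (hp : p ∉ J.1.map (Fin.succEmb n)) (s : Fin k) :
    (J.1.orderEmbOfFin J.2 s).succ ∈ (coneFace J p hp).1 :=
  mem_insert_of_mem (mem_map_of_mem _ (orderEmbOfFin_mem J.1 J.2 s))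

variable {f : {s : Finset (Fin n) // s.card = k} → (Fin n → ℝ) → ℝ}

lemma coeff_vert_eq_zero_of_mem (hf : ∀ S, VanishesOnFace (formEval f) S)
    (J : {s : Finset (Fin n) // s.card = k}) {p : Fin (n+1)}
    (hp : p ∈ insert 0 (J.1.map (Fin.succEmb n))) : f J (vert n p) = 0 := by
  have h0 : (0 : Fin (n+1)) ∉ J.1.map (Fin.succEmb n) := by simp [Fin.succ_ne_zero]
  have h := (hf (coneFace J 0 h0)).apply_vert_sub_vert hp
    (fun s => (J.1.orderEmbOfFin J.2 s).succ) (fun _ => 0)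
    (succ_orderEmbOfFin_mem_coneFace J 0 h0) (fun _ => mem_insert_self _ _)
  simpa only [vert_succ, vert_zero, sub_zero, formEval_single_orderEmbOfFin] using h

lemma coeff_vert_eq_zero (hf : ∀ S, VanishesOnFace (formEval f) S)
    (J : {s : Finset (Fin n) // s.card = k}) (p : Fin (n+1)) : f J (vert n p) = 0 := by
  by_cases hp : p ∈ insert 0 (J.1.map (Fin.succEmb n))
  · exact coeff_vert_eq_zero_of_mem hf J hp
  obtain ⟨m, rfl⟩ := Fin.exists_succ_eq.2 fun h0 => hp (h0 ▸ mem_insert_self _ _)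
  have hmJ : m ∉ J.1 := fun h => hp (mem_insert_of_mem (mem_map_of_mem _ h))
  have hm : m.succ ∉ J.1.map (Fin.succEmb n) := fun h => hp (mem_insert_of_mem h)
  have h : formEval f (Pi.single m 1)
      (fun s => Pi.single (J.1.orderEmbOfFin J.2 s) 1 - Pi.single m 1) = 0 := by
    simpa only [vert_succ] using (hf (coneFace J m.succ hm)).apply_vert_sub_vert
      (mem_insert_self _ _) (fun s => (J.1.orderEmbOfFin J.2 s).succ) (fun _ => m.succ)
      (succ_orderEmbOfFin_mem_coneFace J m.succ hm) (fun _ => mem_insert_self _ _)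
  rw [formEval, sum_eq_single J, dxI_single_sub_single J J hmJ, if_pos rfl, mul_one] at h
  · rwa [vert_succ]
  · intro I _ hIJ
    by_cases hmI : m ∈ I.1
    · have hI := coeff_vert_eq_zero_of_mem hf I (mem_insert_of_mem (mem_map_of_mem _ hmI))
      rw [Fin.coe_succEmb, vert_succ] at hI
      rw [hI, zero_mul]
    · rw [dxI_single_sub_single I J hmI, if_neg hIJ, mul_zero]
  · simp

end Coefficients

lemma IsAffineFn.eq_zero_of_vert {n : ℕ} {g : (Fin n → ℝ) → ℝ} (hg : IsAffineFn g)
    (h : ∀ p, g (vert n p) = 0) (x : Fin n → ℝ) : g x = 0 := by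
  obtain ⟨a, b, hab⟩ := hg
  have hb : b = 0 := by simpa [vert_zero, hab] using h 0
  have ha : ∀ i, a i = 0 := fun i => by simpa [vert_succ, hab, hb, Pi.single_apply] using h i.succ
  simp [hab, ha, hb]

/-- A `k`-form with affine coefficients and constant pullbacks to all `k`-faces, all of whose
integrals over `k`-faces vanish, is identically zero on the standard `n`-simplex. -/
theorem zero_integrals_imply_zero {n k : ℕ}
    (f : {s : Finset (Fin n) // s.card = k} → (Fin n → ℝ) → ℝ)
    (hf : ∀ I, IsAffineFn (f I))
    (hconst : ConstOnFaces (formEval f))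
    (hint : ∀ S : {s : Finset (Fin (n+1)) // s.card = k+1}, faceIntegral S (formEval f) = 0) :
    ∀ x ∈ stdSimp n, ∀ v : Fin k → Fin n → ℝ, formEval f x v = 0 := by
  have hvanish : ∀ S, VanishesOnFace (formEval f) S := fun S => hconst.vanishesOnFace (hint S)
  intro x _ v
  refine sum_eq_zero fun J _ => ?_
  rw [(hf J).eq_zero_of_vert (coeff_vert_eq_zero hvanish J) x, zero_mul]
end

section
/- The Whitney map W from k-cochains on the standard n-simplex to k-forms with affine coefficients and constant pullbacks to k-faces is a linear isomorphism onto the space Λᵏₑ of such forms; in particular dim Λᵏₑ = (n+1 choose k+1). -/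
open MeasureTheory Finset

/-
On its own face `S` the Whitney form `W S*` pulls back to `k!` times the volume form, and on any
other face `T` to zero, since a vertex of `S` outside `T` kills either its barycentric coordinate
or a row of the determinant of the `dνⱼ`. This gives injectivity and constant pullbacks. At a fixed
point the Whitney form is alternating in the vectors, so it equals `∑_I W(e_I) dx^I`, and these
coefficients are affine.

Conversely, subtracting from a form in `Λᵏₑ` the Whitney form with the same face constants leaves a
form `∑ f_I dx^I` with affine `f_I` and vanishing pullbacks. On the face `{0} ∪ {eᵢ : i ∈ I}` this
shows that `f_I` vanishes at `0` and at `eᵢ` for `i ∈ I`. For `j ∉ I`, evaluating at `eⱼ` on the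
face `{eⱼ} ∪ {eᵢ : i ∈ I}` in the directions `eᵢ - eⱼ` then leaves only `f_I(eⱼ)`. So every `f_I`
vanishes at every vertex, hence identically.
-/

instance {R M N ι : Type*} [Semiring R] [AddCommMonoid M] [Module R M] [AddCommMonoid N]
    [Module R N] : IsZeroApply (M [⋀^ι]→ₗ[R] N) (ι → M) N :=
  ⟨AlternatingMap.zero_apply⟩

instance {R M N ι : Type*} [Semiring R] [AddCommMonoid M] [Module R M] [AddCommMonoid N]
    [Module R N] : IsAddApply (M [⋀^ι]→ₗ[R] N) (ι → M) N :=
  ⟨AlternatingMap.add_apply⟩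

section AffineFunctions

variable {n : ℕ}

def affineFunctions (n : ℕ) : Submodule ℝ ((Fin n → ℝ) → ℝ) where
  carrier := {f | IsAffineFn f}
  zero_mem' := ⟨0, 0, by simp⟩
  add_mem' := by
    rintro f g ⟨a, b, hf⟩ ⟨a', b', hg⟩
    exact ⟨a + a', b + b', fun x => by
      simp only [Pi.add_apply, hf, hg, add_mul, Finset.sum_add_distrib]; ring⟩
  smul_mem' := by
    rintro r f ⟨a, b, hf⟩
    exact ⟨r • a, r * b, fun x => by simp [hf, Finset.mul_sum, mul_add, mul_assoc]⟩

lemma IsAffineFn.const_mul {f : (Fin n → ℝ) → ℝ} (hf : IsAffineFn f) (r : ℝ) :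
    IsAffineFn fun x => r * f x :=
  (affineFunctions n).smul_mem r hf

lemma IsAffineFn.mul_const {f : (Fin n → ℝ) → ℝ} (hf : IsAffineFn f) (r : ℝ) :
    IsAffineFn fun x => f x * r := by
  simpa only [mul_comm] using hf.const_mul r

lemma IsAffineFn.sub {f g : (Fin n → ℝ) → ℝ} (hf : IsAffineFn f) (hg : IsAffineFn g) :
    IsAffineFn (f - g) :=
  (affineFunctions n).sub_mem hf hg

lemma IsAffineFn.sum {ι : Type*} (s : Finset ι) {f : ι → (Fin n → ℝ) → ℝ}
    (hf : ∀ i ∈ s, IsAffineFn (f i)) : IsAffineFn fun x => ∑ i ∈ s, f i x := by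
  rw [← Finset.sum_fn]
  exact (affineFunctions n).sum_mem hf

lemma IsAffineFn.eq_zero_of_vert_s15 {f : (Fin n → ℝ) → ℝ} (hf : IsAffineFn f)
    (hvert : ∀ p, f (vert n p) = 0) : f = 0 := by
  obtain ⟨a, b, hf⟩ := hf
  have hb : b = 0 := by simpa [hf, vert] using hvert 0
  have ha (i : Fin n) : a i = 0 := by simpa [hf, hb, vert, Pi.single_apply] using hvert i.succ
  funext x
  simp [hf, ha, hb]

lemma isAffineFn_nu (j : Fin (n+1)) : IsAffineFn (nu n j) := by
  induction j using Fin.cases with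
  | zero => exact ⟨fun _ => -1, 1, fun x => by simp [nu, Finset.sum_neg_distrib]; ring⟩
  | succ i => exact ⟨Pi.single i 1, 0, fun x => by simp [nu, Pi.single_apply]⟩

end AffineFunctions

namespace Whitney

section Enum

variable {α : Type*} [LinearOrder α] {m : ℕ}

def enum (s : {s : Finset α // s.card = m}) : Fin m ↪o α :=
  s.1.orderEmbOfFin s.2

@[simp]
lemma orderEmbOfFin_eq_enum (s : {s : Finset α // s.card = m}) : s.1.orderEmbOfFin s.2 = enum s :=
  rfl

lemma enum_mem (s : {s : Finset α // s.card = m}) (j : Fin m) : enum s j ∈ s.1 :=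
  s.1.orderEmbOfFin_mem s.2 j

lemma exists_enum_eq (s : {s : Finset α // s.card = m}) {a : α} (ha : a ∈ s.1) :
    ∃ j, enum s j = a := by
  rw [← Set.mem_range, enum, Finset.range_orderEmbOfFin]
  exact ha

end Enum

lemma exists_mem_notMem_of_ne {α : Type*} {m : ℕ} {S T : {s : Finset α // s.card = m}}
    (h : S ≠ T) : ∃ p ∈ S.1, p ∉ T.1 := by
  by_contra! hsub
  exact h (Subtype.ext (Finset.eq_of_subset_of_card_le hsub (by rw [S.2, T.2])))

variable {n k : ℕ}

abbrev Face (n k : ℕ) := {s : Finset (Fin (n+1)) // s.card = k+1}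
abbrev MultiIndex (n k : ℕ) := {s : Finset (Fin n) // s.card = k}

lemma vert_mem_stdSimp (j : Fin (n+1)) : vert n j ∈ stdSimp n := by
  induction j using Fin.cases with
  | zero => simp [vert, stdSimp]
  | succ i => simp [vert, stdSimp, Pi.single_apply, apply_ite]

lemma faceDir_sub (S : Face n k) (w w' : Fin k → ℝ) :
    faceDir S (w - w') = faceDir S w - faceDir S w' := by
  simp only [faceDir, Pi.sub_apply, sub_smul, Finset.sum_sub_distrib]

lemma faceDir_vert (S : Face n k) (j : Fin (k+1)) :
    faceDir S (vert k j) = vert n (enum S j) - vert n (enum S 0) := by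
  induction j using Fin.cases with
  | zero => simp [faceDir, vert]
  | succ s => simp [faceDir, vert, Pi.single_apply, ite_smul]

lemma facePt_vert (S : Face n k) (j : Fin (k+1)) :
    facePt S (vert k j) = vert n (enum S j) := by
  rw [facePt, ← faceDir, faceDir_vert]
  exact add_sub_cancel _ _

def dnuDual (n : ℕ) (j : Fin (n+1)) : Module.Dual ℝ (Fin n → ℝ) where
  toFun := dnu n j
  map_add' a b := by
    induction j using Fin.cases <;> simp [dnu, Finset.sum_add_distrib, add_comm]
  map_smul' r a := by
    induction j using Fin.cases <;> simp [dnu, Finset.mul_sum]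

lemma dnuDual_apply (j : Fin (n+1)) (v : Fin n → ℝ) : dnuDual n j v = dnu n j v := rfl

lemma nu_eq_dnu_add (j : Fin (n+1)) (x : Fin n → ℝ) :
    nu n j x = dnu n j x + if j = 0 then 1 else 0 := by
  induction j using Fin.cases <;> simp [nu, dnu, Fin.succ_ne_zero, sub_eq_neg_add]

lemma sum_nu (x : Fin n → ℝ) : ∑ j, nu n j x = 1 := by
  simp [Fin.sum_univ_succ, nu]

lemma sum_dnu (v : Fin n → ℝ) : ∑ j, dnu n j v = 0 := by
  simp [Fin.sum_univ_succ, dnu]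

lemma dnu_vert (j m : Fin (n+1)) :
    dnu n j (vert n m) = (if j = m then 1 else 0) - if j = 0 then 1 else 0 := by
  induction j using Fin.cases <;> induction m using Fin.cases <;>
    simp [dnu, vert, Pi.single_apply, Fin.succ_ne_zero, eq_comm]

lemma dnu_faceDir (S : Face n k) (p : Fin (n+1)) (w : Fin k → ℝ) :
    dnu n p (faceDir S w) =
      ∑ s : Fin k, w s * ((if p = enum S s.succ then 1 else 0) - if p = enum S 0 then 1 else 0) := by
  rw [← dnuDual_apply, faceDir, map_sum]
  refine Finset.sum_congr rfl fun s _ => ?_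
  rw [map_smul, map_sub, dnuDual_apply, dnuDual_apply, dnu_vert, dnu_vert, smul_eq_mul,
    sub_sub_sub_cancel_right]
  rfl

lemma dnu_faceDir_enum (S : Face n k) (j : Fin (k+1)) (w : Fin k → ℝ) :
    dnu n (enum S j) (faceDir S w) = dnu k j w := by
  rw [dnu_faceDir]
  induction j using Fin.cases <;>
    simp [dnu, (enum S).injective.eq_iff, Fin.succ_ne_zero, (Fin.succ_ne_zero _).symm]

lemma dnu_faceDir_of_notMem (S : Face n k) {p : Fin (n+1)} (hp : p ∉ S.1) (w : Fin k → ℝ) :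
    dnu n p (faceDir S w) = 0 := by
  have hne : ∀ j, p ≠ enum S j := fun j h => hp (h ▸ enum_mem S j)
  simp [dnu_faceDir, hne]

lemma nu_facePt (S : Face n k) (p : Fin (n+1)) (y : Fin k → ℝ) :
    nu n p (facePt S y) = (if p = enum S 0 then 1 else 0) + dnu n p (faceDir S y) := by
  rw [nu_eq_dnu_add, facePt, ← faceDir, ← dnuDual_apply, map_add, dnuDual_apply, dnuDual_apply,
    dnu_vert, add_right_comm, sub_add_cancel]
  rfl

lemma nu_facePt_enum (S : Face n k) (j : Fin (k+1)) (y : Fin k → ℝ) :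
    nu n (enum S j) (facePt S y) = nu k j y := by
  rw [nu_facePt, dnu_faceDir_enum, nu_eq_dnu_add j]
  simp only [(enum S).injective.eq_iff, add_comm]

lemma nu_facePt_of_notMem (S : Face n k) {p : Fin (n+1)} (hp : p ∉ S.1) (y : Fin k → ℝ) :
    nu n p (facePt S y) = 0 := by
  have hne : p ≠ enum S 0 := fun h => hp (h ▸ enum_mem S 0)
  simp [nu_facePt, dnu_faceDir_of_notMem S hp, hne]

/- Laplace expansion along the first column of the matrix with columns `ν(y), dν(w₁), …, dν(wₖ)`;
adding all rows to the first one turns it into `(1, 0, …, 0)`. -/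
lemma sum_nu_mul_det_dnu (y : Fin k → ℝ) (w : Fin k → Fin k → ℝ) :
    ∑ j : Fin (k+1), (-1 : ℝ) ^ (j : ℕ) * nu k j y *
        (Matrix.of fun t m => dnu k (j.succAbove t) (w m)).det =
      (Matrix.of fun i j => w j i).det := by
  set B : Matrix (Fin (k+1)) (Fin (k+1)) ℝ :=
    Matrix.of fun j => Fin.cons (nu k j y) fun m => dnu k j (w m)
  have hrows : ∑ j, B j = Pi.single 0 1 := by
    funext m
    refine (Finset.sum_apply m _ _).trans ?_
    induction m using Fin.cases <;> simp [B, sum_nu, sum_dnu]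
  calc _ = B.det := by rw [Matrix.det_succ_column_zero]; rfl
    _ = (B.updateRow 0 (Pi.single 0 1)).det := by
      simpa [hrows] using (Matrix.det_updateRow_sum B 0 fun _ => 1).symm
    _ = _ := by
      rw [Matrix.det_succ_row_zero, Fin.sum_univ_succ]
      simp [B, Matrix.submatrix, dnu]

lemma whitneyFace_pullback_self (S : Face n k) (y : Fin k → ℝ) (w : Fin k → Fin k → ℝ) :
    whitneyFace S (facePt S y) (fun i => faceDir S (w i)) =
      k.factorial * (Matrix.of fun i j => w j i).det := by
  simp only [whitneyFace, Finset.coe_orderIsoOfFin_apply, orderEmbOfFin_eq_enum, nu_facePt_enum,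
    dnu_faceDir_enum, sum_nu_mul_det_dnu]

lemma whitneyFace_pullback_of_ne {S T : Face n k} (hST : S ≠ T) (y : Fin k → ℝ)
    (w : Fin k → Fin k → ℝ) :
    whitneyFace S (facePt T y) (fun i => faceDir T (w i)) = 0 := by
  obtain ⟨p, hpS, hpT⟩ := exists_mem_notMem_of_ne hST
  obtain ⟨j₀, rfl⟩ := exists_enum_eq S hpS
  simp only [whitneyFace, Finset.coe_orderIsoOfFin_apply, orderEmbOfFin_eq_enum]
  refine mul_eq_zero_of_right _ (Finset.sum_eq_zero fun j _ => ?_)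
  rcases eq_or_ne j j₀ with rfl | hj
  · rw [nu_facePt_of_notMem T hpT, mul_zero, zero_mul]
  · obtain ⟨t₀, ht₀⟩ := Fin.exists_succAbove_eq hj.symm
    refine mul_eq_zero_of_right _ (Matrix.det_eq_zero_of_row_eq_zero t₀ fun m => ?_)
    rw [Matrix.of_apply, ht₀, dnu_faceDir_of_notMem T hpT]

lemma whitney_pullback (c : Face n k → ℝ) (T : Face n k) (y : Fin k → ℝ)
    (w : Fin k → Fin k → ℝ) :
    whitney c (facePt T y) (fun i => faceDir T (w i)) =
      c T * k.factorial * (Matrix.of fun i j => w j i).det := by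
  rw [whitney, Finset.sum_eq_single T, whitneyFace_pullback_self, mul_assoc]
  · exact fun S _ hST => by rw [whitneyFace_pullback_of_ne hST, mul_zero]
  · exact fun h => absurd (Finset.mem_univ T) h

lemma whitney_injective : Function.Injective (whitney (n := n) (k := k)) := by
  intro c d h
  funext S
  have hid : (Matrix.of fun i j => (Pi.single j 1 : Fin k → ℝ) i) = 1 := by
    ext i j
    simp [Matrix.one_apply, Pi.single_apply]
  have := congr_fun₂ h (facePt S 0) fun i => faceDir S (Pi.single i 1)
  rw [whitney_pullback, whitney_pullback, hid, Matrix.det_one, mul_one, mul_one] at this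
  exact mul_right_cancel₀ (Nat.cast_ne_zero.mpr k.factorial_ne_zero) this

lemma constOnFaces_whitney (c : Face n k → ℝ) : ConstOnFaces (whitney c) :=
  fun S => ⟨c S * k.factorial, fun y _ w => whitney_pullback c S y w⟩

def unitFrame (I : MultiIndex n k) : Fin k → Fin n → ℝ := fun m => Pi.single (enum I m) 1

def multiIndexEquiv : MultiIndex n k ≃ Set.powersetCard (Fin n) k :=
  Equiv.subtypeEquivRight fun _ => Set.powersetCard.mem_iff.symm

section ExteriorPower

open exteriorPower

lemma dxI_eq_ιMultiDual (I : MultiIndex n k) (v : Fin k → Fin n → ℝ) :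
    dxI I v = ιMultiDual ℝ k (Pi.basisFun ℝ (Fin n)) (multiIndexEquiv I) (ιMulti ℝ k v) := by
  rw [ιMultiDual_apply_ιMulti, dxI, ← Matrix.det_transpose]
  rfl

lemma ιMulti_unitFrame (I : MultiIndex n k) :
    ιMulti ℝ k (unitFrame I) = ιMulti_family ℝ k (Pi.basisFun ℝ (Fin n)) (multiIndexEquiv I) := by
  unfold ιMulti_family
  congr 1
  ext m i
  simp [unitFrame, Set.powersetCard.ofFinEmbEquiv_symm_apply, multiIndexEquiv]

lemma dxI_unitFrame (I J : MultiIndex n k) : dxI J (unitFrame I) = if J = I then 1 else 0 := by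
  rw [dxI_eq_ιMultiDual, ιMulti_unitFrame]
  split_ifs with h
  · exact h ▸ ιMultiDual_apply_diag ℝ k _ _
  · exact ιMultiDual_apply_nondiag ℝ k _ _ _ (multiIndexEquiv.injective.ne h)

theorem alternatingMap_apply_eq_sum_dxI (φ : (Fin n → ℝ) [⋀^Fin k]→ₗ[ℝ] ℝ)
    (v : Fin k → Fin n → ℝ) : φ v = ∑ I : MultiIndex n k, φ (unitFrame I) * dxI I v := by
  set B := (Pi.basisFun ℝ (Fin n)).exteriorPower k
  rw [← alternatingMapLinearEquiv_apply_ιMulti φ v, ← B.sum_repr (ιMulti ℝ k v), map_sum]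
  refine (Fintype.sum_equiv multiIndexEquiv _ _ fun I => ?_).symm
  rw [map_smul, smul_eq_mul, mul_comm, basis_repr_apply, basis_apply, dxI_eq_ιMultiDual,
    ← ιMulti_unitFrame, alternatingMapLinearEquiv_apply_ιMulti]

end ExteriorPower

lemma dxI_congr {I : MultiIndex n k} {u u' : Fin k → Fin n → ℝ}
    (h : ∀ m, ∀ i ∈ I.1, u m i = u' m i) : dxI I u = dxI I u' := by
  unfold dxI
  congr 1
  ext t m
  exact h m _ (enum_mem I t)

lemma formEval_unitFrame (f : MultiIndex n k → (Fin n → ℝ) → ℝ) (I : MultiIndex n k)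
    (x : Fin n → ℝ) : formEval f x (unitFrame I) = f I x := by
  simp [formEval, dxI_unitFrame]

lemma formEval_sub (f g : MultiIndex n k → (Fin n → ℝ) → ℝ) (x : Fin n → ℝ)
    (v : Fin k → Fin n → ℝ) : formEval (f - g) x v = formEval f x v - formEval g x v := by
  simp [formEval, sub_mul]

def dnuDet (r : Fin k → Fin (n+1)) : (Fin n → ℝ) [⋀^Fin k]→ₗ[ℝ] ℝ :=
  Matrix.detRowAlternating.compLinearMap (LinearMap.pi fun t => dnuDual n (r t))

lemma dnuDet_apply (r : Fin k → Fin (n+1)) (v : Fin k → Fin n → ℝ) :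
    dnuDet r v = (Matrix.of fun t m => dnu n (r t) (v m)).det := by
  rw [← Matrix.det_transpose]
  rfl

def whitneyAlternating (c : Face n k → ℝ) (x : Fin n → ℝ) : (Fin n → ℝ) [⋀^Fin k]→ₗ[ℝ] ℝ :=
  ∑ S, c S • (k.factorial : ℝ) •
    ∑ j : Fin (k+1), ((-1 : ℝ) ^ (j : ℕ) * nu n (enum S j) x) • dnuDet (enum S ∘ j.succAbove)

lemma whitneyAlternating_apply (c : Face n k → ℝ) (x : Fin n → ℝ) (v : Fin k → Fin n → ℝ) :
    whitneyAlternating c x v = whitney c x v := by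
  simp [whitneyAlternating, whitney, whitneyFace, dnuDet_apply, _root_.sum_apply, mul_assoc]

def whitneyCoeff (c : Face n k → ℝ) (I : MultiIndex n k) (x : Fin n → ℝ) : ℝ :=
  whitney c x (unitFrame I)

lemma whitney_eq_formEval (c : Face n k → ℝ) : whitney c = formEval (whitneyCoeff c) := by
  funext x v
  rw [← whitneyAlternating_apply, alternatingMap_apply_eq_sum_dxI, formEval]
  simp only [whitneyAlternating_apply, whitneyCoeff]

lemma isAffineFn_whitneyCoeff (c : Face n k → ℝ) (I : MultiIndex n k) :
    IsAffineFn (whitneyCoeff c I) := by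
  unfold whitneyCoeff whitney whitneyFace
  exact IsAffineFn.sum _ fun S _ => (IsAffineFn.sum _ fun j _ =>
    (((isAffineFn_nu _).const_mul _).mul_const _)).const_mul _ |>.const_mul _

def VanishesOnFaces (F : (Fin n → ℝ) → (Fin k → Fin n → ℝ) → ℝ) : Prop :=
  ∀ S : Face n k, ∀ y ∈ stdSimp k, ∀ w : Fin k → Fin k → ℝ,
    F (facePt S y) (fun i => faceDir S (w i)) = 0

lemma VanishesOnFaces.apply_vert {F : (Fin n → ℝ) → (Fin k → Fin n → ℝ) → ℝ}
    (hF : VanishesOnFaces F) (S : Face n k) {p q : Fin (n+1)} (hp : p ∈ S.1) (hq : q ∈ S.1)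
    (a : Fin k → Fin (n+1)) (ha : ∀ m, a m ∈ S.1) :
    F (vert n p) (fun m => vert n (a m) - vert n q) = 0 := by
  obtain ⟨jp, rfl⟩ := exists_enum_eq S hp
  obtain ⟨jq, rfl⟩ := exists_enum_eq S hq
  choose ja hja using fun m => exists_enum_eq S (ha m)
  simpa [facePt_vert, faceDir_sub, faceDir_vert, hja] using
    hF S (vert k jp) (vert_mem_stdSimp jp) fun m => vert k (ja m) - vert k jq

def insertFace (I : MultiIndex n k) (p : Fin (n+1)) (hp : p ∉ I.1.map (Fin.succEmb n)) :
    Face n k :=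
  ⟨insert p (I.1.map (Fin.succEmb n)), by rw [Finset.card_insert_of_notMem hp, card_map, I.2]⟩

lemma succ_enum_mem_insertFace (I : MultiIndex n k) {p : Fin (n+1)}
    (hp : p ∉ I.1.map (Fin.succEmb n)) (m : Fin k) : (enum I m).succ ∈ (insertFace I p hp).1 :=
  Finset.mem_insert_of_mem (Finset.mem_map_of_mem _ (enum_mem I m))

section Unisolvence

variable {f : MultiIndex n k → (Fin n → ℝ) → ℝ}

lemma apply_vert_eq_zero_of_mem (h0 : VanishesOnFaces (formEval f)) (I : MultiIndex n k)
    {p : Fin (n+1)} (hp : p ∈ insert 0 (I.1.map (Fin.succEmb n))) : f I (vert n p) = 0 := by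
  have h0I : (0 : Fin (n+1)) ∉ I.1.map (Fin.succEmb n) := by simp [Fin.succ_ne_zero]
  have := h0.apply_vert (insertFace I 0 h0I) hp (Finset.mem_insert_self _ _) _
    (succ_enum_mem_insertFace I h0I)
  have hframe : (fun m => vert n (enum I m).succ - vert n 0) = unitFrame I := by
    funext m
    simp [vert, unitFrame]
  rwa [hframe, formEval_unitFrame] at this

lemma apply_vert_succ_eq_zero_of_notMem (h0 : VanishesOnFaces (formEval f)) {i : Fin n}
    (hmem : ∀ J : MultiIndex n k, i ∈ J.1 → f J (vert n i.succ) = 0)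
    {I : MultiIndex n k} (hi : i ∉ I.1) : f I (vert n i.succ) = 0 := by
  have hiI : i.succ ∉ I.1.map (Fin.succEmb n) := by simpa using hi
  have := h0.apply_vert (insertFace I i.succ hiI) (Finset.mem_insert_self _ _)
    (Finset.mem_insert_self _ _) _ (succ_enum_mem_insertFace I hiI)
  rw [← this, ← formEval_unitFrame f I, formEval, formEval]
  refine Finset.sum_congr rfl fun J _ => ?_
  by_cases hiJ : i ∈ J.1
  · rw [hmem J hiJ, zero_mul, zero_mul]
  · congr 1
    refine dxI_congr fun m j hj => ?_
    have hji : j ≠ i := fun h => hiJ (h ▸ hj)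
    simp [vert, unitFrame, Pi.single_apply, hji]

theorem eq_zero_of_vanishesOnFaces (hf : ∀ I, IsAffineFn (f I))
    (h0 : VanishesOnFaces (formEval f)) : f = 0 := by
  have hmem : ∀ I p, p ∈ insert 0 (I.1.map (Fin.succEmb n)) → f I (vert n p) = 0 :=
    fun I _ hp => apply_vert_eq_zero_of_mem h0 I hp
  have hvert (I : MultiIndex n k) (p : Fin (n+1)) : f I (vert n p) = 0 := by
    induction p using Fin.cases with
    | zero => exact hmem I 0 (Finset.mem_insert_self _ _)
    | succ i =>
      by_cases hi : i ∈ I.1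
      · exact hmem I _ (Finset.mem_insert_of_mem (by simpa using hi))
      · exact apply_vert_succ_eq_zero_of_notMem h0 (fun J hJ => hmem J _ (by simpa using hJ)) hi
  funext I
  exact (hf I).eq_zero_of_vert_s15 (hvert I)

end Unisolvence

lemma exists_whitney_eq_formEval {f : MultiIndex n k → (Fin n → ℝ) → ℝ}
    (hf : ∀ I, IsAffineFn (f I)) (hconst : ConstOnFaces (formEval f)) :
    ∃ c, whitney c = formEval f := by
  choose cst hcst using hconst
  refine ⟨fun S => cst S / k.factorial, ?_⟩
  suffices f - whitneyCoeff _ = 0 by rw [whitney_eq_formEval, ← sub_eq_zero.mp this]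
  refine eq_zero_of_vanishesOnFaces (fun I => (hf I).sub (isAffineFn_whitneyCoeff _ I))
    fun S y hy w => ?_
  rw [formEval_sub, ← whitney_eq_formEval, hcst S y hy w, whitney_pullback,
    div_mul_cancel₀ _ (Nat.cast_ne_zero.mpr k.factorial_ne_zero), sub_self]

end Whitney

theorem whitney_linear_iso_general {n k : ℕ} :
    (∀ c d : {s : Finset (Fin (n+1)) // s.card = k+1} → ℝ,
      whitney (c + d) = fun x v => whitney c x v + whitney d x v) ∧
    (∀ (r : ℝ) (c : {s : Finset (Fin (n+1)) // s.card = k+1} → ℝ),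
      whitney (r • c) = fun x v => r * whitney c x v) ∧
    Function.Injective (whitney (n := n) (k := k)) ∧
    Set.range (whitney (n := n) (k := k)) =
      {F | ∃ f : {s : Finset (Fin n) // s.card = k} → (Fin n → ℝ) → ℝ,
        (∀ I, IsAffineFn (f I)) ∧ ConstOnFaces (formEval f) ∧ F = formEval f} ∧
    Nat.card {s : Finset (Fin (n+1)) // s.card = k+1} = Nat.choose (n+1) (k+1) := by
  refine ⟨fun c d => ?_, fun r c => ?_, Whitney.whitney_injective, ?_, ?_⟩
  · funext x v
    simp [whitney, add_mul, Finset.sum_add_distrib]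
  · funext x v
    simp [whitney, Finset.mul_sum, mul_assoc]
  · ext F
    constructor
    · rintro ⟨c, rfl⟩
      rw [Whitney.whitney_eq_formEval]
      exact ⟨_, Whitney.isAffineFn_whitneyCoeff c, Whitney.whitney_eq_formEval c ▸
        Whitney.constOnFaces_whitney c, rfl⟩
    · rintro ⟨f, hf, hconst, rfl⟩
      exact Whitney.exists_whitney_eq_formEval hf hconst
  · simp [Nat.card_eq_fintype_card, Fintype.card_finset_len]

/-- The Whitney map is a linear isomorphism from `k`-cochains onto the space `Λᵏₑ` of `k`-forms
with affine coefficients and constant pullbacks to `k`-faces; in particular the dimension of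
that space is the number `(n+1 choose k+1)` of `k`-faces. -/
theorem whitney_linear_iso {n k : ℕ} (hk : k ≤ n) :
    (∀ c d : {s : Finset (Fin (n+1)) // s.card = k+1} → ℝ,
      whitney (c + d) = fun x v => whitney c x v + whitney d x v) ∧
    (∀ (r : ℝ) (c : {s : Finset (Fin (n+1)) // s.card = k+1} → ℝ),
      whitney (r • c) = fun x v => r * whitney c x v) ∧
    Function.Injective (whitney (n := n) (k := k)) ∧
    Set.range (whitney (n := n) (k := k)) =
      {F | ∃ f : {s : Finset (Fin n) // s.card = k} → (Fin n → ℝ) → ℝ,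
        (∀ I, IsAffineFn (f I)) ∧ ConstOnFaces (formEval f) ∧ F = formEval f} ∧
    Nat.card {s : Finset (Fin (n+1)) // s.card = k+1} = Nat.choose (n+1) (k+1) :=
  whitney_linear_iso_general
end
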